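/- Let F be a field and P_s, Q_t nonzero coprime homogeneous polynomials in F[x,y,z] of degrees s ≥ t ≥ 1. Suppose P = P_s + P_{s−1} + … + P_0 and Q = Q_t + … + Q_0 with PQ having zero homogeneous components in all degrees s+t−1, s+t−2, …, s. Then Q is homogeneous (Q = Q_t). -/

import Mathlib

/-!
Suppose some `Q_k` with `k < t` is nonzero and take `k` maximal. In the degree `s + k` part of
`P * Q` every term other than `P_s * Q_k` involves either a vanishing component or `Q_t`, so the
hypothesis gives `Q_t ∣ P_s * Q_k`. Coprimality of `P_s` and `Q_t` yields `Q_t ∣ Q_k`, which is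
impossible for a nonzero homogeneous polynomial of degree `k < t`.
-/

open MvPolynomial Finset

namespace MvPolynomial

variable {σ R : Type*}

section CommSemiring

variable [CommSemiring R]

section
attribute [local instance] gradedAlgebra

theorem homogeneousComponent_mul (p q : MvPolynomial σ R) (n : ℕ) :
    homogeneousComponent n (p * q) =
      ∑ ij ∈ antidiagonal n, homogeneousComponent ij.1 p * homogeneousComponent ij.2 q := by
  have h := DirectSum.coe_mul_apply_eq_sum_antidiagonal (A := homogeneousSubmodule σ R)
    (DirectSum.decompose _ p) (DirectSum.decompose _ q) n
  rw [← DirectSum.decompose_mul] at h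
  simp only [← decomposition.decompose'_apply, DirectSum.Decomposition.decompose'_eq]
  exact h

end

theorem eq_homogeneousComponent_of_forall_ne {q : MvPolynomial σ R} {t : ℕ}
    (h : ∀ k, k ≠ t → homogeneousComponent k q = 0) : q = homogeneousComponent t q := by
  conv_lhs => rw [← sum_homogeneousComponent q]
  refine Finset.sum_eq_single t (fun k _ hk => h k hk) fun ht => ?_
  exact homogeneousComponent_eq_zero t q (by simpa [Nat.lt_succ_iff] using ht)

end CommSemiring

theorem dvd_homogeneousComponent_mul_sub [CommRing R] {p q : MvPolynomial σ R} {s t k : ℕ}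
    (hp : p.totalDegree ≤ s) (hq : ∀ b, k < b → b ≠ t → homogeneousComponent b q = 0) :
    homogeneousComponent t q ∣
      homogeneousComponent (s + k) (p * q) - homogeneousComponent s p * homogeneousComponent k q := by
  rw [homogeneousComponent_mul, ← add_sum_erase _ _ (HasAntidiagonal.mem_antidiagonal.mpr rfl : (s, k) ∈ antidiagonal (s + k)),
    add_sub_cancel_left]
  refine dvd_sum fun ⟨a, b⟩ hab => ?_
  rw [mem_erase, ne_eq, Prod.mk.injEq, HasAntidiagonal.mem_antidiagonal] at hab
  by_cases hbt : b = t
  · exact hbt ▸ dvd_mul_left _ _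
  rcases lt_or_ge k b with hkb | hbk
  · rw [hq b hkb hbt, mul_zero]
    exact dvd_zero _
  · rw [homogeneousComponent_eq_zero a p (by omega), zero_mul]
    exact dvd_zero _

theorem eq_zero_of_dvd_of_isHomogeneous [CommRing R] [IsDomain R] {f g : MvPolynomial σ R}
    {m n : ℕ} (hf : f.IsHomogeneous m) (hf0 : f ≠ 0) (hg : g.IsHomogeneous n) (hnm : n < m)
    (hfg : f ∣ g) : g = 0 := by
  by_contra hg0
  have := totalDegree_le_of_dvd_of_isDomain hfg hg0
  rw [hf.totalDegree hf0] at this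
  exact absurd (this.trans hg.totalDegree_le) (not_le.mpr hnm)

end MvPolynomial

theorem Q_homogeneous_general (F : Type*) [Field F]
    (P Q : MvPolynomial (Fin 3) F) (s t : ℕ)
    (hPdeg : P.totalDegree = s) (hQdeg : Q.totalDegree = t)
    (hQt : homogeneousComponent t Q ≠ 0)
    (hcop : ∀ d : MvPolynomial (Fin 3) F,
      d ∣ homogeneousComponent s P → d ∣ homogeneousComponent t Q → IsUnit d)
    (hvanish : ∀ r, s ≤ r → r < s + t → homogeneousComponent r (P * Q) = 0) :
    Q = homogeneousComponent t Q := by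
  have hrel : IsRelPrime (homogeneousComponent t Q) (homogeneousComponent s P) :=
    IsRelPrime.symm hcop
  refine eq_homogeneousComponent_of_forall_ne fun k => ?_
  induction k using Nat.strong_decreasing_induction with
  | base => exact ⟨t, fun m hm _ => homogeneousComponent_eq_zero m Q (hQdeg ▸ hm)⟩
  | step k ih =>
    intro hkt
    rcases lt_or_gt_of_ne hkt with hkt | hkt
    · have hdvd := dvd_homogeneousComponent_mul_sub hPdeg.le ih
      rw [hvanish (s + k) (by omega) (by omega), zero_sub, dvd_neg] at hdvd
      exact eq_zero_of_dvd_of_isHomogeneous (homogeneousComponent_isHomogeneous t Q) hQt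
        (homogeneousComponent_isHomogeneous k Q) hkt (hrel.dvd_of_dvd_mul_left hdvd)
    · exact homogeneousComponent_eq_zero k Q (hQdeg ▸ hkt)

theorem Q_homogeneous (F : Type*) [Field F]
    (P Q : MvPolynomial (Fin 3) F) (s t : ℕ) (hts : t ≤ s) (ht : 1 ≤ t)
    (hPdeg : P.totalDegree = s) (hQdeg : Q.totalDegree = t)
    (hPs : homogeneousComponent s P ≠ 0) (hQt : homogeneousComponent t Q ≠ 0)
    (hcop : ∀ d : MvPolynomial (Fin 3) F,
      d ∣ homogeneousComponent s P → d ∣ homogeneousComponent t Q → IsUnit d)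
    (hvanish : ∀ r, s ≤ r → r < s + t → homogeneousComponent r (P * Q) = 0) :
    Q = homogeneousComponent t Q :=
  Q_homogeneous_general F P Q s t hPdeg hQdeg hQt hcop hvanish
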